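/- arXiv:1708.07864 — 3 statements merged into one kernel-verified Lean document; each statement's English description precedes it below -/
import Mathlib

section
/- The rational Darboux function H₀(x,y) = f₁(x,y)⁵ / f₂(x,y)⁴ is a first integral of the unperturbed Żołądek cubic system: for every real a and every point (x,y) ∈ ℝ² with f₂(x,y) ≠ 0, the directional derivative of H₀ at (x,y) in the direction of the vector (P(x,y), Q(x,y)) is zero, i.e. P·∂H₀/∂x + Q·∂H₀/∂y = 0 at (x,y). -/
noncomputable section

/-- The `x`-component of the unperturbed Żołądek cubic vector field. -/
def P₀ (a x y : ℝ) : ℝ := a + 5/2 * x + x * y + x^3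

/-- The `y`-component of the unperturbed Żołądek cubic vector field. -/
def Q₀ (a x y : ℝ) : ℝ := -2*a*x + 2*y - 3*x^2 + 4*y^2 - a*x^3 + 6*x^2*y

/-- The invariant algebraic curve `f₁`. -/
def f₁ (x y : ℝ) : ℝ := x^4 + 4*x^2 + 4*y

/-- The invariant algebraic curve `f₂`. -/
def f₂ (a x y : ℝ) : ℝ := x^5 + 5*x^3 + 5*x*y + 5/2 * x + a

/-- The rational Darboux function `H₀ = f₁⁵ / f₂⁴`. -/
def H₀ (a x y : ℝ) : ℝ := (f₁ x y)^5 / (f₂ a x y)^4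

/-!
`f₁` and `f₂` are invariant curves of `(P₀, Q₀)`: along the field their derivatives are
`K₁ f₁` and `K₂ f₂`, with cofactors `K₁ = 2 + 4y + 4x²` and `K₂ = 5/2 + 5y + 5x²`.
The logarithmic derivative of `f₁⁵ / f₂⁴` along the field is then `5 K₁ - 4 K₂ = 0`.
-/

theorem natCast_mul_pow_pred_mul {R : Type*} [CommSemiring R] (m : ℕ) (a : R) :
    (m : R) * a ^ (m - 1) * a = m * a ^ m := by
  cases m <;> simp [pow_succ, mul_assoc]

theorem pow_div_pow_first_integral_of_cofactors {𝕜 : Type*} [NontriviallyNormedField 𝕜]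
    {F G : 𝕜 → 𝕜 → 𝕜} {x y p q Fx Fy Gx Gy K L : 𝕜} {m n : ℕ}
    (hFx : HasDerivAt (F · y) Fx x) (hFy : HasDerivAt (F x ·) Fy y)
    (hGx : HasDerivAt (G · y) Gx x) (hGy : HasDerivAt (G x ·) Gy y) (hG : G x y ≠ 0)
    (hFcof : p * Fx + q * Fy = K * F x y) (hGcof : p * Gx + q * Gy = L * G x y)
    (hKL : m * K = n * L) :
    p * deriv (fun x' => F x' y ^ m / G x' y ^ n) x
      + q * deriv (fun y' => F x y' ^ m / G x y' ^ n) y = 0 := by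
  have hGn : G x y ^ n ≠ 0 := pow_ne_zero n hG
  rw [((hFx.fun_pow m).fun_div (hGx.fun_pow n) hGn).deriv,
    ((hFy.fun_pow m).fun_div (hGy.fun_pow n) hGn).deriv,
    ← mul_div_assoc, ← mul_div_assoc, ← add_div, div_eq_zero_iff]
  left
  linear_combination (m * F x y ^ (m - 1) * G x y ^ n) * hFcof
    - (n * F x y ^ m * G x y ^ (n - 1)) * hGcof
    + (F x y ^ m * G x y ^ n) * hKL
    + K * G x y ^ n * natCast_mul_pow_pred_mul m (F x y)
    - L * F x y ^ m * natCast_mul_pow_pred_mul n (G x y)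

theorem hasDerivAt_f₁_x (x y : ℝ) : HasDerivAt (f₁ · y) (4 * x ^ 3 + 8 * x) x := by
  unfold f₁
  exact (((hasDerivAt_pow 4 x).add ((hasDerivAt_pow 2 x).const_mul 4)).add_const (4 * y))
    |>.congr_deriv (by ring)

theorem hasDerivAt_f₁_y (x y : ℝ) : HasDerivAt (f₁ x ·) 4 y := by
  unfold f₁
  exact (((hasDerivAt_id y).const_mul 4).const_add _).congr_deriv (by ring)

theorem hasDerivAt_f₂_x (a x y : ℝ) :
    HasDerivAt (f₂ a · y) (5 * x ^ 4 + 15 * x ^ 2 + 5 * y + 5 / 2) x := by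
  unfold f₂
  have h := ((((hasDerivAt_pow 5 x).add ((hasDerivAt_pow 3 x).const_mul 5)).add
    (((hasDerivAt_id x).const_mul 5).mul_const y)).add
    ((hasDerivAt_id x).const_mul (5 / 2))).add_const a
  exact h.congr_deriv (by ring)

theorem hasDerivAt_f₂_y (a x y : ℝ) : HasDerivAt (f₂ a x ·) (5 * x) y := by
  unfold f₂
  exact (((((hasDerivAt_id y).const_mul (5 * x)).const_add _).add_const _).add_const a)
    |>.congr_deriv (by ring)

theorem f₁_invariant (a x y : ℝ) :
    P₀ a x y * (4 * x ^ 3 + 8 * x) + Q₀ a x y * 4 = (2 + 4 * y + 4 * x ^ 2) * f₁ x y := by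
  unfold P₀ Q₀ f₁
  ring

theorem f₂_invariant (a x y : ℝ) :
    P₀ a x y * (5 * x ^ 4 + 15 * x ^ 2 + 5 * y + 5 / 2) + Q₀ a x y * (5 * x)
      = (5 / 2 + 5 * y + 5 * x ^ 2) * f₂ a x y := by
  unfold P₀ Q₀ f₂
  ring

/-- `H₀ = f₁⁵/f₂⁴` is a first integral of the unperturbed Żołądek cubic system:
wherever `f₂ ≠ 0`, the derivative of `H₀` along the vector field `(P, Q)` vanishes,
i.e. `P·∂H₀/∂x + Q·∂H₀/∂y = 0`. -/
theorem H0_first_integral (a x y : ℝ) (h : f₂ a x y ≠ 0) :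
    P₀ a x y * deriv (fun x' => H₀ a x' y) x
      + Q₀ a x y * deriv (fun y' => H₀ a x y') y = 0 := by
  have hK : ((5 : ℕ) : ℝ) * (2 + 4 * y + 4 * x ^ 2)
      = ((4 : ℕ) : ℝ) * (5 / 2 + 5 * y + 5 * x ^ 2) := by
    push_cast
    ring
  exact pow_div_pow_first_integral_of_cofactors (hasDerivAt_f₁_x x y) (hasDerivAt_f₁_y x y)
    (hasDerivAt_f₂_x a x y) (hasDerivAt_f₂_y a x y) h
    (f₁_invariant a x y) (f₂_invariant a x y) hK

end
end

section
/- The function M(x,y) = 20 f₁(x,y)⁴ / f₂(x,y)⁵ is an integrating factor of the unperturbed Żołądek cubic system: for every real a and every point (x,y) with f₁(x,y) ≠ 0 and f₂(x,y) ≠ 0, the divergence of the rescaled vector field (M·P, M·Q) vanishes, i.e. ∂(M·P)/∂x + ∂(M·Q)/∂y = 0 at (x,y). -/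
/-! Darboux's method. Both curves are invariant: `X f₁ = (4x² + 4y + 2) f₁` and
`X f₂ = (5x² + 5y + 5/2) f₂`, while `div X = 9x² + 9y + 9/2`. By the product rule,
`div (F^(m+1) G^(-(n+1)) X) = F^m G^(-(n+2)) · F G · ((m+1) K - (n+1) L + div X)` whenever
`X F = K F` and `X G = L G`, and for `m + 1 = 4`, `n + 1 = 5` the last factor vanishes
identically. -/

noncomputable section

/-- The integrating factor `M = 20 f₁⁴ / f₂⁵`. -/
def M₀ (a x y : ℝ) : ℝ := 20 * (f₁ x y)^4 / (f₂ a x y)^5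

theorem HasDerivAt.const_mul_pow_div_pow_mul {u v p : ℝ → ℝ} {u' v' p' t : ℝ} (c : ℝ) (m n : ℕ)
    (hu : HasDerivAt u u' t) (hv : HasDerivAt v v' t) (hp : HasDerivAt p p' t) (hvt : v t ≠ 0) :
    HasDerivAt (fun s => c * u s ^ (m + 1) / v s ^ (n + 1) * p s)
      (c * u t ^ m / v t ^ (n + 2) *
        ((m + 1) * u' * v t * p t - (n + 1) * u t * v' * p t + u t * v t * p')) t := by
  refine ((((hu.pow (m + 1)).const_mul c).div (hv.pow (n + 1)) (pow_ne_zero _ hvt)).mul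
    hp).congr_deriv ?_
  simp only [Pi.div_apply, Pi.pow_apply]
  field_simp
  push_cast
  ring

theorem darboux_divergence_eq_zero {F G P Q : ℝ → ℝ → ℝ} {x y Fx Fy Gx Gy Px Qy K L : ℝ}
    (c : ℝ) (m n : ℕ)
    (hFx : HasDerivAt (F · y) Fx x) (hFy : HasDerivAt (F x ·) Fy y)
    (hGx : HasDerivAt (G · y) Gx x) (hGy : HasDerivAt (G x ·) Gy y)
    (hPx : HasDerivAt (P · y) Px x) (hQy : HasDerivAt (Q x ·) Qy y) (hG : G x y ≠ 0)
    (hF_inv : P x y * Fx + Q x y * Fy = K * F x y)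
    (hG_inv : P x y * Gx + Q x y * Gy = L * G x y)
    (hKL : (m + 1) * K - (n + 1) * L + (Px + Qy) = 0) :
    deriv (fun x' => c * F x' y ^ (m + 1) / G x' y ^ (n + 1) * P x' y) x
      + deriv (fun y' => c * F x y' ^ (m + 1) / G x y' ^ (n + 1) * Q x y') y = 0 := by
  rw [(hFx.const_mul_pow_div_pow_mul c m n hGx hPx hG).deriv,
    (hFy.const_mul_pow_div_pow_mul c m n hGy hQy hG).deriv, ← mul_add]
  refine mul_eq_zero_of_right _ ?_
  linear_combination (m + 1) * G x y * hF_inv - (n + 1) * F x y * hG_inv + F x y * G x y * hKL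

theorem hasDerivAt_P₀_x (a x y : ℝ) : HasDerivAt (P₀ a · y) (5 / 2 + y + 3 * x ^ 2) x :=
  (((((hasDerivAt_id' x).const_mul (5 / 2)).const_add a).add
    ((hasDerivAt_id' x).mul_const y)).add (hasDerivAt_pow 3 x)).congr_deriv (by norm_num)

theorem hasDerivAt_Q₀_y (a x y : ℝ) : HasDerivAt (Q₀ a x ·) (2 + 8 * y + 6 * x ^ 2) y :=
  ((((((hasDerivAt_id' y).const_mul 2).const_add (-2 * a * x)).sub_const (3 * x ^ 2)).add
    ((hasDerivAt_pow 2 y).const_mul 4)).sub_const (a * x ^ 3)).add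
    ((hasDerivAt_id' y).const_mul (6 * x ^ 2)) |>.congr_deriv (by norm_num; ring)

theorem f₁_cofactor (a x y : ℝ) :
    P₀ a x y * (4 * x ^ 3 + 8 * x) + Q₀ a x y * 4 = (4 * x ^ 2 + 4 * y + 2) * f₁ x y := by
  simp only [P₀, Q₀, f₁]; ring

theorem f₂_cofactor (a x y : ℝ) :
    P₀ a x y * (5 * x ^ 4 + 15 * x ^ 2 + 5 * y + 5 / 2) + Q₀ a x y * (5 * x)
      = (5 * x ^ 2 + 5 * y + 5 / 2) * f₂ a x y := by
  simp only [P₀, Q₀, f₂]; ring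

theorem M_integrating_factor_general (a x y : ℝ) (h₂ : f₂ a x y ≠ 0) :
    deriv (fun x' => M₀ a x' y * P₀ a x' y) x
      + deriv (fun y' => M₀ a x y' * Q₀ a x y') y = 0 := by
  simpa only [M₀] using darboux_divergence_eq_zero 20 3 4
    (hasDerivAt_f₁_x x y) (hasDerivAt_f₁_y x y) (hasDerivAt_f₂_x a x y) (hasDerivAt_f₂_y a x y)
    (hasDerivAt_P₀_x a x y) (hasDerivAt_Q₀_y a x y) h₂ (f₁_cofactor a x y) (f₂_cofactor a x y)
    (by push_cast; ring)

/-- `M = 20 f₁⁴/f₂⁵` is an integrating factor of the unperturbed Żołądek cubic system: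
at every point where `f₁ ≠ 0` and `f₂ ≠ 0`, the divergence of the rescaled vector field
`(M·P, M·Q)` vanishes, i.e. `∂(M·P)/∂x + ∂(M·Q)/∂y = 0`. -/
theorem M_integrating_factor (a x y : ℝ) (h₁ : f₁ x y ≠ 0) (h₂ : f₂ a x y ≠ 0) :
    deriv (fun x' => M₀ a x' y * P₀ a x' y) x
      + deriv (fun y' => M₀ a x y' * Q₀ a x y') y = 0 :=
  M_integrating_factor_general a x y h₂

end
end

section
/- For every real a with a < −2^{5/4} (so that a⁴ > 32), the three octic polynomials 2304313595a⁸ − 1702233920a⁶ − 11829269248a⁴ − 39211065344a² + 8642101248, 11681524055a⁸ − 8555309984a⁶ − 56944147200a⁴ − 204210659328a² + 30640177152, and 6314158847a⁸ − 4591849024a⁶ − 29599122432a⁴ − 112639700992a² + 11915624448 are all strictly positive; consequently the quantities G₃, G₆ and G₉, which equal these polynomials multiplied respectively by the nonzero rational functions −23476167/(1024 a¹³(a⁴−32)³), −180880/(3 a¹⁴(a⁴−32)³), and 66163809931245/(46137344 a¹⁵(a⁴−32)³), are all nonzero. -/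
/-!
Put `t = a²`. The hypothesis gives `t² = a⁴ > 32`, hence also `t > 5`, and on that range each
octic is a quartic in `t` dominated by its leading term, and its positivity follows from that of
`(t² - 32)(t - 5)`, `(t² - 32)(t - 5)²`, `(t² - 32)²` and `(t - 5)²`.
The prefactors of `G₃`, `G₆`, `G₉` are nonzero because `a ≠ 0` and `a⁴ ≠ 32`.
-/

namespace Zoladek

lemma thirtyTwo_lt_pow_four_of_lt_neg_rpow {a : ℝ} (ha : a < -(2 : ℝ) ^ ((5 : ℝ) / 4)) :
    32 < a ^ 4 := by
  set c := (2 : ℝ) ^ ((5 : ℝ) / 4)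
  have hc : 0 < c := by positivity
  have hc4 : c ^ 4 = 32 := by
    rw [← Real.rpow_natCast, ← Real.rpow_mul zero_le_two]
    norm_num
  have hca : c ^ 4 < (-a) ^ 4 := pow_lt_pow_left₀ (by linarith) hc.le (by norm_num)
  simpa [hc4, Even.neg_pow (by decide : Even 4)] using hca

lemma five_lt_sq_of_thirtyTwo_lt_pow_four {a : ℝ} (h : 32 < a ^ 4) : 5 < a ^ 2 := by
  nlinarith [sq_nonneg a]

section Octics

variable {a : ℝ}

lemma octic_G₃_pos (h4 : 32 < a ^ 4) :
    0 < 2304313595*a^8 - 1702233920*a^6 - 11829269248*a^4 - 39211065344*a^2 + 8642101248 := by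
  have h5 := sub_pos.2 (five_lt_sq_of_thirtyTwo_lt_pow_four h4)
  have h4 := sub_pos.2 h4
  nlinarith [mul_pos h4 h5, mul_pos (mul_pos h4 h5) h5, mul_pos h4 h4, mul_pos h5 h5]

lemma octic_G₆_pos (h4 : 32 < a ^ 4) :
    0 < 11681524055*a^8 - 8555309984*a^6 - 56944147200*a^4 - 204210659328*a^2 + 30640177152 := by
  have h5 := sub_pos.2 (five_lt_sq_of_thirtyTwo_lt_pow_four h4)
  have h4 := sub_pos.2 h4
  nlinarith [mul_pos h4 h5, mul_pos (mul_pos h4 h5) h5, mul_pos h4 h4, mul_pos h5 h5]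

lemma octic_G₉_pos (h4 : 32 < a ^ 4) :
    0 < 6314158847*a^8 - 4591849024*a^6 - 29599122432*a^4 - 112639700992*a^2 + 11915624448 := by
  have h5 := sub_pos.2 (five_lt_sq_of_thirtyTwo_lt_pow_four h4)
  have h4 := sub_pos.2 h4
  nlinarith [mul_pos h4 h5, mul_pos (mul_pos h4 h5) h5, mul_pos h4 h4, mul_pos h5 h5]

end Octics

end Zoladek

open Zoladek in
/-- For every real `a` with `a < −2^(5/4)` (so that `a⁴ > 32`), the three octic
polynomials appearing in `G₃`, `G₆`, `G₉` are strictly positive; consequently the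
focus-value coefficients `G₃`, `G₆` and `G₉`, which equal these polynomials multiplied
by the indicated nonzero rational functions of `a`, are all nonzero. -/
theorem octic_factors_positive (a : ℝ) (ha : a < -(2:ℝ)^((5:ℝ)/4)) :
    0 < 2304313595*a^8 - 1702233920*a^6 - 11829269248*a^4 - 39211065344*a^2 + 8642101248 ∧
    0 < 11681524055*a^8 - 8555309984*a^6 - 56944147200*a^4 - 204210659328*a^2 + 30640177152 ∧
    0 < 6314158847*a^8 - 4591849024*a^6 - 29599122432*a^4 - 112639700992*a^2 + 11915624448 ∧
    (-23476167/(1024 * a^13 * (a^4-32)^3)) *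
      (2304313595*a^8 - 1702233920*a^6 - 11829269248*a^4 - 39211065344*a^2 + 8642101248) ≠ 0 ∧
    (-180880/(3 * a^14 * (a^4-32)^3)) *
      (11681524055*a^8 - 8555309984*a^6 - 56944147200*a^4 - 204210659328*a^2 + 30640177152) ≠ 0 ∧
    (66163809931245/(46137344 * a^15 * (a^4-32)^3)) *
      (6314158847*a^8 - 4591849024*a^6 - 29599122432*a^4 - 112639700992*a^2 + 11915624448) ≠ 0 := by
  have h4 := thirtyTwo_lt_pow_four_of_lt_neg_rpow ha
  have ha0 : a ≠ 0 := by rintro rfl; norm_num at h4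
  have hd : a ^ 4 - 32 ≠ 0 := (sub_pos.2 h4).ne'
  have P₃ := octic_G₃_pos h4
  have P₆ := octic_G₆_pos h4
  have P₉ := octic_G₉_pos h4
  refine ⟨P₃, P₆, P₉, ?_, ?_, ?_⟩
  · exact mul_ne_zero (div_ne_zero (by norm_num) (by positivity)) P₃.ne'
  · exact mul_ne_zero (div_ne_zero (by norm_num) (by positivity)) P₆.ne'
  · exact mul_ne_zero (div_ne_zero (by norm_num) (by positivity)) P₉.ne'
end
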